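/- arXiv:2505.00258 — 2 statements merged into one kernel-verified Lean document; each statement's English description precedes it below -/
import Mathlib

section
/- Let β < q₀ < q < 1 − β with q₀m, qm, βm integers. Suppose A x* = b_t and b = b_t + η + ξ with ‖ξ‖₀ ≤ βm and supp(η) ∩ supp(ξ) = ∅. For any x_k ∈ ℝⁿ, if S := {j ∈ supp(ξ) : Q₀ ≤ |r_j| ≤ Q} is nonempty (with the paper's tie-breaking convention), then (1/|S|) Σ_{i∈S} ‖(x_k + r_i a_i) − x*‖² ≤ 2·(1 + σ_max(A)²/(m(1 − q − β)) + 2σ_max(A)/(√m·√(1 − q − β)))·‖x_k − x*‖² + 2(1 − q)·‖η‖_∞²/(1 − q − β). -/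
open Finset

/-- Largest singular value of `A`, as the operator norm of the associated
Euclidean linear map. -/
noncomputable def sigmaMax {m n : ℕ} (A : Matrix (Fin m) (Fin n) ℝ) : ℝ :=
  ‖LinearMap.toContinuousLinearMap (Matrix.toEuclideanLin A)‖

/-- `sigmaSMin A k` is the minimum over all index sets `I` of cardinality `k`
of the smallest value of `‖A_I x‖` over unit vectors `x`. -/
noncomputable def sigmaSMin {m n : ℕ} (A : Matrix (Fin m) (Fin n) ℝ) (k : ℕ) : ℝ :=
  sInf {t : ℝ | ∃ I : Finset (Fin m), I.card = k ∧
    t = sInf {u : ℝ | ∃ x : EuclideanSpace ℝ (Fin n), ‖x‖ = 1 ∧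
      u = Real.sqrt (∑ i ∈ I, (A.mulVec (fun k => x k) i) ^ 2)}}

/-- The `j`-th row of `A`, as a vector in Euclidean space. -/
noncomputable def row {m n : ℕ} (A : Matrix (Fin m) (Fin n) ℝ) (j : Fin m) :
    EuclideanSpace ℝ (Fin n) := WithLp.toLp 2 (fun k => A j k)

/-- Residual `r_j = b_j - ⟨x, a_j⟩`. -/
noncomputable def resid {m n : ℕ} (A : Matrix (Fin m) (Fin n) ℝ) (b : Fin m → ℝ)
    (x : EuclideanSpace ℝ (Fin n)) (j : Fin m) : ℝ :=
  b j - ∑ k, x k * A j k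

/-- `IsQuantile f k Q` says `Q` is the `k`-th smallest value (1-indexed,
counted with multiplicity) of the multiset `{f j}`. -/
def IsQuantile {m : ℕ} (f : Fin m → ℝ) (k : ℕ) (Q : ℝ) : Prop :=
  k ≤ (Finset.univ.filter fun j => f j ≤ Q).card ∧
  (Finset.univ.filter fun j => f j < Q).card < k

/-! Rows outside `supp ξ` with residual at least `Q` number more than `m (1 - q - β)`, and on
each of them `|⟪x_k - x*, a_j⟫| ≥ Q - ‖η‖_∞`; since `∑ j, ⟪x_k - x*, a_j⟫² ≤ σ² ‖x_k - x*‖²`, this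
forces `Q ≤ ‖η‖_∞ + σ ‖x_k - x*‖ / √(m (1 - q - β))`. An update indexed by `S` moves `x_k` by
`|r_i| ≤ Q` along a unit vector, so its error is at most `(Q + ‖x_k - x*‖)²`, and
`(a + b)² ≤ 2a² + 2b²` turns this into the stated bound. -/

open RealInnerProductSpace

section Rows

variable {m n : ℕ} (A : Matrix (Fin m) (Fin n) ℝ)

lemma inner_row (x : EuclideanSpace ℝ (Fin n)) (j : Fin m) :
    ⟪x, row A j⟫ = ∑ k, x k * A j k := by
  simp [PiLp.inner_apply, row, mul_comm]

lemma norm_row {j : Fin m} (hj : ∑ k, A j k ^ 2 = 1) : ‖row A j‖ = 1 := by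
  simp [EuclideanSpace.norm_eq, row, hj]

lemma sum_inner_row_sq_le (x : EuclideanSpace ℝ (Fin n)) :
    ∑ j, ⟪x, row A j⟫ ^ 2 ≤ sigmaMax A ^ 2 * ‖x‖ ^ 2 := by
  have h : ‖Matrix.toEuclideanLin A x‖ ^ 2 = ∑ j, ⟪x, row A j⟫ ^ 2 := by
    simp [EuclideanSpace.norm_sq_eq, Matrix.toLpLin_apply, Matrix.mulVec, dotProduct,
      inner_row, mul_comm]
  rw [← h, ← mul_pow]
  exact pow_le_pow_left₀ (norm_nonneg _) ((LinearMap.toContinuousLinearMap _).le_opNorm x) 2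

lemma resid_eq_sub_inner {xstar : EuclideanSpace ℝ (Fin n)} {bt b η ξ : Fin m → ℝ}
    (hsol : A.mulVec (fun k => xstar k) = bt) (hb : b = bt + η + ξ)
    (x : EuclideanSpace ℝ (Fin n)) (j : Fin m) :
    resid A b x j = η j + ξ j - ⟪x - xstar, row A j⟫ := by
  subst hsol hb
  simp only [resid, inner_sub_left, inner_row, Pi.add_apply, Matrix.mulVec, dotProduct, mul_comm]
  ring

end Rows

lemma IsQuantile.lt_card_sdiff_add {m : ℕ} {f : Fin m → ℝ} {k : ℕ} {Q : ℝ}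
    (hQ : IsQuantile f k Q) (T : Finset (Fin m)) :
    m < #((univ.filter fun j => Q ≤ f j) \ T) + k + #T := by
  have hsplit := card_filter_add_card_filter_not (s := univ) (fun j => f j < Q)
  simp only [not_lt, card_univ, Fintype.card_fin] at hsplit
  have := card_le_card_sdiff_add_card (s := univ.filter fun j => Q ≤ f j) (t := T)
  have := hQ.2
  omega

lemma card_mul_sq_le_sum_sq {ι : Type*} (U : Finset ι) (g : ι → ℝ) {t : ℝ} (ht : 0 ≤ t)
    (hg : ∀ j ∈ U, t ≤ |g j|) : #U * t ^ 2 ≤ ∑ j ∈ U, g j ^ 2 := by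
  rw [← nsmul_eq_mul]
  exact card_nsmul_le_sum U _ _ fun j hj => sq_abs (g j) ▸ pow_le_pow_left₀ ht (hg j hj) 2

lemma le_div_sqrt_of_mul_sq_le {t K c N : ℝ} (hc : 0 < c) (hcN : c ≤ N) (hK : 0 ≤ K)
    (h : N * t ^ 2 ≤ K ^ 2) : t ≤ K / √c := by
  rw [le_div_iff₀ (Real.sqrt_pos.mpr hc)]
  have hsq : (t * √c) ^ 2 ≤ K ^ 2 := by
    rw [mul_pow, Real.sq_sqrt hc.le]
    nlinarith [sq_nonneg t]
  exact (abs_le_of_sq_le_sq' hsq hK).2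

lemma norm_add_smul_sub_le {E : Type*} [NormedAddCommGroup E] [NormedSpace ℝ E] (x y a : E)
    (ha : ‖a‖ = 1) (r : ℝ) : ‖x + r • a - y‖ ≤ ‖x - y‖ + |r| := by
  rw [add_sub_right_comm]
  exact (norm_add_le _ _).trans_eq (by rw [norm_smul, ha, mul_one, Real.norm_eq_abs])

lemma IsQuantile.le_norm_add_sigmaMax_mul_div_sqrt {m n : ℕ} (A : Matrix (Fin m) (Fin n) ℝ)
    {kq kβ : ℕ} (hk : (kq : ℝ) + kβ < m) {xstar : EuclideanSpace ℝ (Fin n)} {bt b η ξ : Fin m → ℝ}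
    (hsol : A.mulVec (fun k => xstar k) = bt) (hb : b = bt + η + ξ)
    (hsparse : #(univ.filter fun j => ξ j ≠ 0) ≤ kβ)
    {xk : EuclideanSpace ℝ (Fin n)} {Q : ℝ}
    (hQ : IsQuantile (fun j => |resid A b xk j|) kq Q) :
    Q ≤ ‖η‖ + sigmaMax A * ‖xk - xstar‖ / √(m - kq - kβ) := by
  have hcount := hQ.lt_card_sdiff_add (univ.filter fun j => ξ j ≠ 0)
  set U := (univ.filter fun j => Q ≤ |resid A b xk j|) \ univ.filter fun j => ξ j ≠ 0
  have hU : (m : ℝ) - kq - kβ ≤ #U := by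
    have : (m : ℝ) < #U + kq + kβ := by exact_mod_cast hcount.trans_le (by omega)
    linarith
  have hσ : 0 ≤ sigmaMax A := norm_nonneg _
  rcases le_or_gt Q ‖η‖ with hQη | hQη
  · have : 0 ≤ sigmaMax A * ‖xk - xstar‖ / √(m - kq - kβ) := by positivity
    linarith
  have hgap : ∀ j ∈ U, Q - ‖η‖ ≤ |⟪xk - xstar, row A j⟫| := by
    intro j hj
    simp only [U, mem_sdiff, mem_filter, mem_univ, true_and, not_not] at hj
    have hr := resid_eq_sub_inner A hsol hb xk j
    rw [hj.2, add_zero] at hr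
    have hη : |η j| ≤ ‖η‖ := norm_le_pi_norm η j
    linarith [hr ▸ hj.1, abs_sub (η j) ⟪xk - xstar, row A j⟫]
  have hsum : #U * (Q - ‖η‖) ^ 2 ≤ (sigmaMax A * ‖xk - xstar‖) ^ 2 :=
    calc _ ≤ ∑ j ∈ U, ⟪xk - xstar, row A j⟫ ^ 2 := card_mul_sq_le_sum_sq U _ (by linarith) hgap
      _ ≤ ∑ j, ⟪xk - xstar, row A j⟫ ^ 2 :=
        sum_le_sum_of_subset_of_nonneg (subset_univ U) fun _ _ _ => sq_nonneg _
      _ ≤ _ := (sum_inner_row_sq_le A _).trans_eq (mul_pow _ _ _).symm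
  have := le_div_sqrt_of_mul_sq_le (by linarith) hU (by positivity) hsum
  linarith

theorem dqrk_eh_corrupt_rows_bound_general
    {m n : ℕ} (A : Matrix (Fin m) (Fin n) ℝ)
    (q β : ℝ) (kq kβ : ℕ)
    (hm : 0 < m)
    (hrow : ∀ j, ∑ k, (A j k) ^ 2 = 1)
    (hq1 : q < 1 - β)
    (hkq : (kq : ℝ) = q * m) (hkβ : (kβ : ℝ) = β * m)
    (xstar : EuclideanSpace ℝ (Fin n)) (bt b η ξ : Fin m → ℝ)
    (hsol : A.mulVec (fun k => xstar k) = bt)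
    (hb : b = bt + η + ξ)
    (hsparse : (Finset.univ.filter fun j => ξ j ≠ 0).card ≤ kβ)
    (xk : EuclideanSpace ℝ (Fin n)) (Q₀ Q : ℝ)
    (hQ : IsQuantile (fun j => |resid A b xk j|) kq Q)
    (S : Finset (Fin m))
    (hS : S = Finset.univ.filter fun j =>
      ξ j ≠ 0 ∧ Q₀ ≤ |resid A b xk j| ∧ |resid A b xk j| ≤ Q)
    (hSne : S.Nonempty) :
    (1 / (S.card : ℝ)) * ∑ i ∈ S, ‖(xk + resid A b xk i • row A i) - xstar‖ ^ 2 ≤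
      2 * (1 + sigmaMax A ^ 2 / (m * (1 - q - β)) +
          2 * sigmaMax A / (Real.sqrt m * Real.sqrt (1 - q - β))) * ‖xk - xstar‖ ^ 2 +
        2 * (1 - q) * ‖η‖ ^ 2 / (1 - q - β) := by
  have hm' : (0 : ℝ) < m := by exact_mod_cast hm
  have hc : 0 < 1 - q - β := by linarith
  have hβ : 0 ≤ β := nonneg_of_mul_nonneg_left (hkβ ▸ kβ.cast_nonneg) hm'
  have hk : (m : ℝ) - kq - kβ = m * (1 - q - β) := by rw [hkq, hkβ]; ring
  have hQle := hQ.le_norm_add_sigmaMax_mul_div_sqrt A (by nlinarith) hsol hb hsparse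
  rw [hk, Real.sqrt_mul hm'.le, mul_div_right_comm] at hQle
  set s := sigmaMax A / (√m * √(1 - q - β))
  set E := ‖xk - xstar‖
  have hS' : ∀ i ∈ S, |resid A b xk i| ≤ Q := fun i hi => by
    rw [hS, mem_filter] at hi; exact hi.2.2.2
  have hstep : ∀ i ∈ S, ‖xk + resid A b xk i • row A i - xstar‖ ^ 2 ≤ (Q + E) ^ 2 :=
    fun i hi => pow_le_pow_left₀ (norm_nonneg _) ((norm_add_smul_sub_le _ _ _
      (norm_row A (hrow i)) _).trans (by linarith [hS' i hi])) 2
  have hQ0 : 0 ≤ Q := by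
    obtain ⟨i, hi⟩ := hSne; exact (abs_nonneg _).trans (hS' i hi)
  have hs : (1 + s) ^ 2 = 1 + sigmaMax A ^ 2 / (m * (1 - q - β)) + 2 * sigmaMax A /
      (√m * √(1 - q - β)) := by
    rw [add_sq, div_pow, mul_pow, Real.sq_sqrt hm'.le, Real.sq_sqrt hc.le]; ring
  have hη : 2 * ‖η‖ ^ 2 ≤ 2 * (1 - q) * ‖η‖ ^ 2 / (1 - q - β) := by
    rw [le_div_iff₀ hc]; nlinarith [sq_nonneg ‖η‖]
  calc _ ≤ (Q + E) ^ 2 := by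
        rw [one_div_mul_eq_div, ← expect_eq_sum_div_card]; exact expect_le hSne hstep
    _ ≤ (‖η‖ + (1 + s) * E) ^ 2 :=
        pow_le_pow_left₀ (by positivity) (by linarith [one_add_mul s E]) 2
    _ ≤ 2 * (1 + s) ^ 2 * E ^ 2 + 2 * ‖η‖ ^ 2 := by nlinarith [sq_nonneg (‖η‖ - (1 + s) * E)]
    _ ≤ _ := by rw [← hs]; linarith

theorem dqrk_eh_corrupt_rows_bound
    {m n : ℕ} (A : Matrix (Fin m) (Fin n) ℝ)
    (q₀ q β : ℝ) (kq₀ kq kβ : ℕ)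
    (hm : 0 < m) (hmn : n ≤ m) (hrank : A.rank = n)
    (hrow : ∀ j, ∑ k, (A j k) ^ 2 = 1)
    (hβq₀ : β < q₀) (hq₀q : q₀ < q) (hq1 : q < 1 - β)
    (hkq₀ : (kq₀ : ℝ) = q₀ * m) (hkq : (kq : ℝ) = q * m) (hkβ : (kβ : ℝ) = β * m)
    (xstar : EuclideanSpace ℝ (Fin n)) (bt b η ξ : Fin m → ℝ)
    (hsol : A.mulVec (fun k => xstar k) = bt)
    (hb : b = bt + η + ξ)
    (hsparse : (Finset.univ.filter fun j => ξ j ≠ 0).card ≤ kβ)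
    (hdisj : ∀ j, η j = 0 ∨ ξ j = 0)
    (xk : EuclideanSpace ℝ (Fin n)) (Q₀ Q : ℝ)
    (hQ₀ : IsQuantile (fun j => |resid A b xk j|) kq₀ Q₀)
    (hQ : IsQuantile (fun j => |resid A b xk j|) kq Q)
    (S : Finset (Fin m))
    (hS : S = Finset.univ.filter fun j =>
      ξ j ≠ 0 ∧ Q₀ ≤ |resid A b xk j| ∧ |resid A b xk j| ≤ Q)
    (hSne : S.Nonempty) :
    (1 / (S.card : ℝ)) * ∑ i ∈ S, ‖(xk + resid A b xk i • row A i) - xstar‖ ^ 2 ≤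
      2 * (1 + sigmaMax A ^ 2 / (m * (1 - q - β)) +
          2 * sigmaMax A / (Real.sqrt m * Real.sqrt (1 - q - β))) * ‖xk - xstar‖ ^ 2 +
        2 * (1 - q) * ‖η‖ ^ 2 / (1 - q - β) :=
  dqrk_eh_corrupt_rows_bound_general A q β kq kβ hm hrow hq1 hkq hkβ xstar bt b η ξ hsol hb hsparse
    xk Q₀ Q hQ S hS hSne
end

section
/- Let β < q₀ < q < 1 − β with q₀m, qm and βm integers. Suppose A x* = b_t and b = b_t + ξ with ‖ξ‖₀ ≤ βm. For any x_k ∈ ℝⁿ, if the set S := {j ∈ supp(ξ) : Q₀ ≤ |r_j| ≤ Q} is nonempty (with the paper's tie-breaking convention), then (1/|S|) Σ_{i∈S} ‖(x_k + r_i a_i) − x*‖² ≤ 2·(1 + σ_max(A)²/(m(1 − q − β)))·‖x_k − x*‖². -/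
open Finset

/-!
A step along a unit row with residual `|r_i| ≤ Q` has squared error at most
`2‖xk - x*‖² + 2Q²`. Conversely, since `Q` is the `q`-quantile and at most `βm` rows are
corrupted, at least `m(1 - q - β)` uncorrupted rows have `|r_j| ≥ Q`; on those
`r_j = -(A (xk - x*))_j`, so `Q² m(1 - q - β) ≤ ‖A (xk - x*)‖² ≤ σ_max² ‖xk - x*‖²`.
-/

lemma norm_add_smul_sub_sq_le {E : Type*} [SeminormedAddCommGroup E] [NormedSpace ℝ E]
    (x a y : E) (r : ℝ) (ha : ‖a‖ = 1) :
    ‖x + r • a - y‖ ^ 2 ≤ 2 * ‖x - y‖ ^ 2 + 2 * r ^ 2 := by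
  have hle : ‖x + r • a - y‖ ≤ ‖x - y‖ + |r| :=
    calc ‖x + r • a - y‖ = ‖(x - y) + r • a‖ := by rw [sub_add_eq_add_sub, add_sub_right_comm]
      _ ≤ ‖x - y‖ + ‖r • a‖ := norm_add_le _ _
      _ = ‖x - y‖ + |r| := by rw [norm_smul, ha, mul_one, Real.norm_eq_abs]
  nlinarith [sq_abs r, sq_nonneg (‖x - y‖ - |r|), norm_nonneg (x + r • a - y)]

lemma card_mul_sq_le_norm_sq {ι : Type*} [Fintype ι] (v : EuclideanSpace ℝ ι) (T : Finset ι)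
    {Q : ℝ} (hQ : 0 ≤ Q) (hT : ∀ j ∈ T, Q ≤ |v j|) : #T * Q ^ 2 ≤ ‖v‖ ^ 2 := by
  have hsq : ∀ j ∈ T, Q ^ 2 ≤ v j ^ 2 := fun j hj => by
    simpa only [sq_abs] using pow_le_pow_left₀ hQ (hT j hj) 2
  calc #T * Q ^ 2 = ∑ _j ∈ T, Q ^ 2 := by rw [sum_const, nsmul_eq_mul]
    _ ≤ ∑ j ∈ T, v j ^ 2 := sum_le_sum hsq
    _ ≤ ∑ j, v j ^ 2 := sum_le_sum_of_subset_of_nonneg (subset_univ T) fun j _ _ => sq_nonneg _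
    _ = ‖v‖ ^ 2 := by simp [EuclideanSpace.norm_sq_eq]

lemma lt_card_filter_add_of_isQuantile {m : ℕ} (f ξ : Fin m → ℝ) {k kβ : ℕ} {Q : ℝ}
    (hQ : IsQuantile f k Q) (hsparse : #{j | ξ j ≠ 0} ≤ kβ) :
    m < #{j | ξ j = 0 ∧ Q ≤ f j} + kβ + k := by
  have hcover : (univ : Finset (Fin m)) ⊆
      univ.filter (fun j => ξ j = 0 ∧ Q ≤ f j) ∪ univ.filter (ξ · ≠ 0) ∪ univ.filter (f · < Q) := by
    intro j _
    simp only [mem_union, mem_filter, mem_univ, true_and]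
    by_cases hξ : ξ j = 0 <;> by_cases hf : Q ≤ f j <;> simp_all
  have hm := (card_le_card hcover).trans
    ((card_union_le _ _).trans (Nat.add_le_add_right (card_union_le _ _) _))
  rw [card_univ, Fintype.card_fin] at hm
  have := hQ.2
  omega

lemma norm_row_sq {m n : ℕ} (A : Matrix (Fin m) (Fin n) ℝ) (j : Fin m) :
    ‖row A j‖ ^ 2 = ∑ k, A j k ^ 2 := by
  simp [row, EuclideanSpace.norm_sq_eq]

lemma norm_toEuclideanLin_le_sigmaMax {m n : ℕ} (A : Matrix (Fin m) (Fin n) ℝ)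
    (v : EuclideanSpace ℝ (Fin n)) : ‖Matrix.toEuclideanLin A v‖ ≤ sigmaMax A * ‖v‖ :=
  (LinearMap.toContinuousLinearMap (Matrix.toEuclideanLin A)).le_opNorm v

lemma resid_mulVec_add {m n : ℕ} (A : Matrix (Fin m) (Fin n) ℝ)
    (xstar x : EuclideanSpace ℝ (Fin n)) (ξ : Fin m → ℝ) (j : Fin m) :
    resid A (A.mulVec xstar.ofLp + ξ) x j = ξ j - Matrix.toEuclideanLin A (x - xstar) j := by
  simp [resid, Matrix.toLpLin_apply, Matrix.mulVec, dotProduct, mul_sub, mul_comm, sum_sub_distrib]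
  ring

lemma sq_quantile_mul_le {m n : ℕ} (A : Matrix (Fin m) (Fin n) ℝ)
    (xstar x : EuclideanSpace ℝ (Fin n)) (ξ : Fin m → ℝ) {k kβ : ℕ} {Q : ℝ} (hQ_nonneg : 0 ≤ Q)
    (hQ : IsQuantile (fun j => |resid A (A.mulVec xstar.ofLp + ξ) x j|) k Q)
    (hsparse : #{j | ξ j ≠ 0} ≤ kβ) :
    Q ^ 2 * (m - kβ - k) ≤ sigmaMax A ^ 2 * ‖x - xstar‖ ^ 2 := by
  set g := Matrix.toEuclideanLin A (x - xstar)
  set T : Finset (Fin m) := {j | ξ j = 0 ∧ Q ≤ |resid A (A.mulVec xstar.ofLp + ξ) x j|}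
  have hcard : (m : ℝ) - kβ - k ≤ #T := by
    have := lt_card_filter_add_of_isQuantile _ ξ hQ hsparse
    have : (m : ℝ) < #T + kβ + k := by exact_mod_cast this
    linarith
  have hT : ∀ j ∈ T, Q ≤ |g j| := fun j hj => by
    obtain ⟨hξ, hQj⟩ := (mem_filter.mp hj).2
    rwa [resid_mulVec_add, hξ, zero_sub, abs_neg] at hQj
  calc Q ^ 2 * (m - kβ - k) ≤ #T * Q ^ 2 := by nlinarith [sq_nonneg Q]
    _ ≤ ‖g‖ ^ 2 := card_mul_sq_le_norm_sq g T hQ_nonneg hT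
    _ ≤ (sigmaMax A * ‖x - xstar‖) ^ 2 :=
        pow_le_pow_left₀ (norm_nonneg _) (norm_toEuclideanLin_le_sigmaMax A _) 2
    _ = sigmaMax A ^ 2 * ‖x - xstar‖ ^ 2 := mul_pow _ _ _

theorem dqrk_corrupt_rows_bound_general
    {m n : ℕ} (A : Matrix (Fin m) (Fin n) ℝ)
    (q β : ℝ) (kq kβ : ℕ)
    (hrow : ∀ j, ∑ k, (A j k) ^ 2 = 1)
    (hq1 : q < 1 - β)
    (hkq : (kq : ℝ) = q * m) (hkβ : (kβ : ℝ) = β * m)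
    (xstar : EuclideanSpace ℝ (Fin n)) (bt b ξ : Fin m → ℝ)
    (hsol : A.mulVec (fun k => xstar k) = bt)
    (hb : b = bt + ξ)
    (hsparse : (Finset.univ.filter fun j => ξ j ≠ 0).card ≤ kβ)
    (xk : EuclideanSpace ℝ (Fin n)) (Q₀ Q : ℝ)
    (hQ : IsQuantile (fun j => |resid A b xk j|) kq Q)
    (S : Finset (Fin m))
    (hS : S = Finset.univ.filter fun j =>
      ξ j ≠ 0 ∧ Q₀ ≤ |resid A b xk j| ∧ |resid A b xk j| ≤ Q)
    (hSne : S.Nonempty) :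
    (1 / (S.card : ℝ)) * ∑ i ∈ S, ‖(xk + resid A b xk i • row A i) - xstar‖ ^ 2 ≤
      2 * (1 + sigmaMax A ^ 2 / (m * (1 - q - β))) * ‖xk - xstar‖ ^ 2 := by
  have hQS : ∀ i ∈ S, |resid A b xk i| ≤ Q := fun i hi => (mem_filter.mp (hS ▸ hi)).2.2.2
  obtain ⟨i₀, hi₀⟩ := hSne
  have hD : 0 < m * (1 - q - β) := mul_pos (Nat.cast_pos.mpr i₀.pos) (by linarith)
  have hQ_nonneg : 0 ≤ Q := (abs_nonneg _).trans (hQS i₀ hi₀)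
  have hQ_sq : Q ^ 2 ≤ sigmaMax A ^ 2 * ‖xk - xstar‖ ^ 2 / (m * (1 - q - β)) := by
    rw [le_div_iff₀ hD]
    calc Q ^ 2 * (m * (1 - q - β)) = Q ^ 2 * (m - kβ - kq) := by rw [hkq, hkβ]; ring
      _ ≤ _ := sq_quantile_mul_le A xstar xk ξ hQ_nonneg (hsol ▸ hb ▸ hQ) hsparse
  have hstep : ∀ i ∈ S, ‖(xk + resid A b xk i • row A i) - xstar‖ ^ 2 ≤
      2 * ‖xk - xstar‖ ^ 2 + 2 * Q ^ 2 := fun i hi => by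
    have hrow_i : ‖row A i‖ = 1 := by
      rw [← pow_eq_one_iff_of_nonneg (norm_nonneg _) two_ne_zero, norm_row_sq, hrow]
    have hr : resid A b xk i ^ 2 ≤ Q ^ 2 :=
      sq_le_sq.mpr (by rw [abs_of_nonneg hQ_nonneg]; exact hQS i hi)
    linarith [norm_add_smul_sub_sq_le xk (row A i) xstar (resid A b xk i) hrow_i]
  calc (1 / (S.card : ℝ)) * ∑ i ∈ S, ‖(xk + resid A b xk i • row A i) - xstar‖ ^ 2
      = S.expect fun i => ‖(xk + resid A b xk i • row A i) - xstar‖ ^ 2 := by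
        rw [expect_eq_sum_div_card, one_div_mul_eq_div]
    _ ≤ 2 * ‖xk - xstar‖ ^ 2 + 2 * Q ^ 2 := expect_le ⟨i₀, hi₀⟩ hstep
    _ ≤ 2 * (1 + sigmaMax A ^ 2 / (m * (1 - q - β))) * ‖xk - xstar‖ ^ 2 := by
        rw [mul_div_right_comm] at hQ_sq
        linarith

theorem dqrk_corrupt_rows_bound
    {m n : ℕ} (A : Matrix (Fin m) (Fin n) ℝ)
    (q₀ q β : ℝ) (kq₀ kq kβ : ℕ)
    (hm : 0 < m) (hmn : n ≤ m) (hrank : A.rank = n)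
    (hrow : ∀ j, ∑ k, (A j k) ^ 2 = 1)
    (hβq₀ : β < q₀) (hq₀q : q₀ < q) (hq1 : q < 1 - β)
    (hkq₀ : (kq₀ : ℝ) = q₀ * m) (hkq : (kq : ℝ) = q * m) (hkβ : (kβ : ℝ) = β * m)
    (xstar : EuclideanSpace ℝ (Fin n)) (bt b ξ : Fin m → ℝ)
    (hsol : A.mulVec (fun k => xstar k) = bt)
    (hb : b = bt + ξ)
    (hsparse : (Finset.univ.filter fun j => ξ j ≠ 0).card ≤ kβ)
    (xk : EuclideanSpace ℝ (Fin n)) (Q₀ Q : ℝ)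
    (hQ₀ : IsQuantile (fun j => |resid A b xk j|) kq₀ Q₀)
    (hQ : IsQuantile (fun j => |resid A b xk j|) kq Q)
    (S : Finset (Fin m))
    (hS : S = Finset.univ.filter fun j =>
      ξ j ≠ 0 ∧ Q₀ ≤ |resid A b xk j| ∧ |resid A b xk j| ≤ Q)
    (hSne : S.Nonempty) :
    (1 / (S.card : ℝ)) * ∑ i ∈ S, ‖(xk + resid A b xk i • row A i) - xstar‖ ^ 2 ≤
      2 * (1 + sigmaMax A ^ 2 / (m * (1 - q - β))) * ‖xk - xstar‖ ^ 2 :=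
  dqrk_corrupt_rows_bound_general A q β kq kβ hrow hq1 hkq hkβ xstar bt b ξ hsol hb hsparse xk Q₀ Q
    hQ S hS hSne
end
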